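/- Let d ≥ 1 be a natural number, D > 0, m > 0, c > 0, let Y be a real normed vector space, and let y⋆ : [0, D]^d → Y (with [0, D]^d ⊆ ℝ^d carrying the supremum norm) satisfy the lower Lipschitz (expansion) bound ‖y⋆(x) − y⋆(x')‖ ≥ c·‖x − x'‖_∞ for all x, x' ∈ [0, D]^d. Suppose S is a finite subset of [0, D]^d such that every point of the solution manifold y⋆([0, D]^d) lies within distance m of some point of {y⋆(s) : s ∈ S} (i.e., the labels associated with S form an m-cover of the solution manifold). Then |S| ≥ (c·D / (2m))^d. (Quantitative instantiation of Proposition 4's geometric scaling law N_warm ≳ (L·diam(X)/m_θ)^{d_eff}: covering the solution manifold at the basin resolution m requires a number of labeled samples growing like (D/m)^d.) -/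

import Mathlib

/-!
Since `y⋆` expands distances by the factor `c`, an `m`-cover of the solution manifold by
labels `y⋆(s)` pulls back to a cover of the cube `[0, D]^d` by sup-norm balls of radius `m / c`
centred at the training points. Each such ball is a cube of volume `(2m / c)^d`, so comparing
volumes gives `D^d ≤ |S| · (2m / c)^d`.
-/

open MeasureTheory Metric Set

theorem subset_biUnion_closedBall_of_le_dist_comp {X Y : Type*} [PseudoMetricSpace X]
    [PseudoMetricSpace Y] {f : X → Y} {K : Set X} {S : Finset X} {c m : ℝ} (hc : 0 < c)
    (hf : ∀ x ∈ K, ∀ x' ∈ K, c * dist x x' ≤ dist (f x) (f x')) (hSK : ↑S ⊆ K)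
    (hcov : ∀ x ∈ K, ∃ s ∈ S, dist (f x) (f s) ≤ m) :
    K ⊆ ⋃ s ∈ S, closedBall s (m / c) := by
  intro x hx
  obtain ⟨s, hs, hxs⟩ := hcov x hx
  refine mem_biUnion hs (mem_closedBall.2 ((le_div_iff₀' hc).2 ?_))
  exact (hf x hx s (hSK hs)).trans hxs

theorem prod_sub_le_card_mul_of_Icc_subset_biUnion_closedBall {ι : Type*} [Fintype ι]
    {a b : ι → ℝ} (hab : a ≤ b) {r : ℝ} (hr : 0 ≤ r) {S : Finset (ι → ℝ)}
    (hcover : Icc a b ⊆ ⋃ s ∈ S, closedBall s r) :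
    ∏ i, (b i - a i) ≤ S.card * (2 * r) ^ Fintype.card ι := by
  rw [← Real.volume_Icc_pi_toReal hab]
  refine ENNReal.toReal_le_of_le_ofReal (by positivity) ?_
  calc volume (Icc a b) ≤ volume (⋃ s ∈ S, closedBall s r) := measure_mono hcover
    _ ≤ ∑ s ∈ S, volume (closedBall s r) := measure_biUnion_finset_le S _
    _ = ENNReal.ofReal (S.card * (2 * r) ^ Fintype.card ι) := by
      simp only [Real.volume_pi_closedBall _ hr, Finset.sum_const, nsmul_eq_mul,
        ENNReal.ofReal_mul (Nat.cast_nonneg _), ENNReal.ofReal_natCast]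

theorem warm_start_sample_complexity_lower_bound_general
    (d : ℕ) (D m c : ℝ) (hD : 0 < D) (hm : 0 < m) (hc : 0 < c)
    {Y : Type*} [NormedAddCommGroup Y]
    (ystar : (Fin d → ℝ) → Y)
    (hexp : ∀ x ∈ Set.Icc (0 : Fin d → ℝ) (fun _ => D),
      ∀ x' ∈ Set.Icc (0 : Fin d → ℝ) (fun _ => D),
        c * ‖x - x'‖ ≤ ‖ystar x - ystar x'‖)
    (S : Finset (Fin d → ℝ))
    (hS : (S : Set (Fin d → ℝ)) ⊆ Set.Icc (0 : Fin d → ℝ) (fun _ => D))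
    (hcov : ∀ x ∈ Set.Icc (0 : Fin d → ℝ) (fun _ => D),
      ∃ s ∈ S, ‖ystar x - ystar s‖ ≤ m) :
    (c * D / (2 * m)) ^ d ≤ (S.card : ℝ) := by
  have hcover := subset_biUnion_closedBall_of_le_dist_comp (f := ystar) hc
    (by simpa only [dist_eq_norm] using hexp) hS (by simpa only [dist_eq_norm] using hcov)
  have hvol := prod_sub_le_card_mul_of_Icc_subset_biUnion_closedBall
    (fun _ => hD.le) (div_pos hm hc).le hcover
  simp only [sub_zero, Finset.prod_const, Finset.card_univ, Fintype.card_fin] at hvol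
  have hscale : c * D / (2 * m) = D / (2 * (m / c)) := by field_simp
  rw [hscale, div_pow, div_le_iff₀ (by positivity)]
  exact hvol

/-- Quantitative instantiation of Proposition 4's geometric scaling law:
if the labels of a finite training set S ⊆ [0,D]^d form an m-cover of the
solution manifold and the solution map expands distances by a factor c, then
|S| ≥ (c·D/(2m))^d. -/
theorem warm_start_sample_complexity_lower_bound
    (d : ℕ) (hd : 1 ≤ d) (D m c : ℝ) (hD : 0 < D) (hm : 0 < m) (hc : 0 < c)
    {Y : Type*} [NormedAddCommGroup Y] [NormedSpace ℝ Y]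
    (ystar : (Fin d → ℝ) → Y)
    (hexp : ∀ x ∈ Set.Icc (0 : Fin d → ℝ) (fun _ => D),
      ∀ x' ∈ Set.Icc (0 : Fin d → ℝ) (fun _ => D),
        c * ‖x - x'‖ ≤ ‖ystar x - ystar x'‖)
    (S : Finset (Fin d → ℝ))
    (hS : (S : Set (Fin d → ℝ)) ⊆ Set.Icc (0 : Fin d → ℝ) (fun _ => D))
    (hcov : ∀ x ∈ Set.Icc (0 : Fin d → ℝ) (fun _ => D),
      ∃ s ∈ S, ‖ystar x - ystar s‖ ≤ m) :
    (c * D / (2 * m)) ^ d ≤ (S.card : ℝ) :=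
  warm_start_sample_complexity_lower_bound_general d D m c hD hm hc ystar hexp S hS hcov
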